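/- Let Y_C, Y_R, T and B be n×n complex matrices with Y_C, Y_R and T invertible, and suppose I − B, Y_C + Y_R, and I + ρ_G^M·B are invertible, where ρ_G^M := T^{-1} Y_C (Y_C + Y_R)^{-1} (Y_C − Y_R) Y_C^{-1} T and N := (Y_R + Y_C) Y_C^{-1}. Define Y_in := T (I + B)(I − B)^{-1} T^{-1} Y_C and suppose that Y_in + Y_R is invertible. Then Y_R (Y_in + Y_R)^{-1} (Y_in − Y_R) Y_R^{-1} = N T (ρ_G^M + B)(I + ρ_G^M·B)^{-1} T^{-1} N^{-1}. -/
import Mathlib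


/-- The input reflection coefficient `ρ_in = Y_R (Y_in + Y_R)⁻¹ (Y_in − Y_R) Y_R⁻¹`
of a multiconductor transmission line, with input admittance
`Y_in = T (I + B)(I − B)⁻¹ T⁻¹ Y_C`, can be written in factored form
`ρ_in = N T (ρ_G^M + B)(I + ρ_G^M B)⁻¹ T⁻¹ N⁻¹` where
`ρ_G^M = T⁻¹ Y_C (Y_C + Y_R)⁻¹ (Y_C − Y_R) Y_C⁻¹ T` and `N = (Y_R + Y_C) Y_C⁻¹`. -/
theorem input_reflection_coefficient_factored
    {n : Type*} [Fintype n] [DecidableEq n]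
    (Y_C Y_R T B : Matrix n n ℂ)
    (hC : IsUnit Y_C) (hR : IsUnit Y_R) (hT : IsUnit T)
    (hB : IsUnit (1 - B)) (hCR : IsUnit (Y_C + Y_R))
    (hGB : IsUnit
      (1 + (T⁻¹ * Y_C * (Y_C + Y_R)⁻¹ * (Y_C - Y_R) * Y_C⁻¹ * T) * B))
    (hIn : IsUnit (T * (1 + B) * (1 - B)⁻¹ * T⁻¹ * Y_C + Y_R)) :
    Y_R * (T * (1 + B) * (1 - B)⁻¹ * T⁻¹ * Y_C + Y_R)⁻¹ *
        (T * (1 + B) * (1 - B)⁻¹ * T⁻¹ * Y_C - Y_R) * Y_R⁻¹ =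
      ((Y_R + Y_C) * Y_C⁻¹) * T *
        ((T⁻¹ * Y_C * (Y_C + Y_R)⁻¹ * (Y_C - Y_R) * Y_C⁻¹ * T) + B) *
        (1 + (T⁻¹ * Y_C * (Y_C + Y_R)⁻¹ * (Y_C - Y_R) * Y_C⁻¹ * T) * B)⁻¹ *
        T⁻¹ * ((Y_R + Y_C) * Y_C⁻¹)⁻¹ := by
  have dC := (Matrix.isUnit_iff_isUnit_det _).mp hC
  have dR := (Matrix.isUnit_iff_isUnit_det _).mp hR
  have dT := (Matrix.isUnit_iff_isUnit_det _).mp hT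
  have dB := (Matrix.isUnit_iff_isUnit_det _).mp hB
  have dS := (Matrix.isUnit_iff_isUnit_det _).mp hCR
  have hCC : Y_C * Y_C⁻¹ = 1 := Matrix.mul_nonsing_inv _ dC
  have hCC' : Y_C⁻¹ * Y_C = 1 := Matrix.nonsing_inv_mul _ dC
  have hRR : Y_R * Y_R⁻¹ = 1 := Matrix.mul_nonsing_inv _ dR
  have hRR' : Y_R⁻¹ * Y_R = 1 := Matrix.nonsing_inv_mul _ dR
  have hTT : T * T⁻¹ = 1 := Matrix.mul_nonsing_inv _ dT
  have hTT' : T⁻¹ * T = 1 := Matrix.nonsing_inv_mul _ dT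
  have hBB : (1 - B) * (1 - B)⁻¹ = 1 := Matrix.mul_nonsing_inv _ dB
  have hBB' : (1 - B)⁻¹ * (1 - B) = 1 := Matrix.nonsing_inv_mul _ dB
  have hSS : (Y_C + Y_R) * (Y_C + Y_R)⁻¹ = 1 := Matrix.mul_nonsing_inv _ dS
  have hSS' : (Y_C + Y_R)⁻¹ * (Y_C + Y_R) = 1 := Matrix.nonsing_inv_mul _ dS
  have cC : ∀ M : Matrix n n ℂ, Y_C * (Y_C⁻¹ * M) = M := fun M => by
    rw [← Matrix.mul_assoc, hCC, Matrix.one_mul]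
  have cC' : ∀ M : Matrix n n ℂ, Y_C⁻¹ * (Y_C * M) = M := fun M => by
    rw [← Matrix.mul_assoc, hCC', Matrix.one_mul]
  have cR : ∀ M : Matrix n n ℂ, Y_R * (Y_R⁻¹ * M) = M := fun M => by
    rw [← Matrix.mul_assoc, hRR, Matrix.one_mul]
  have cR' : ∀ M : Matrix n n ℂ, Y_R⁻¹ * (Y_R * M) = M := fun M => by
    rw [← Matrix.mul_assoc, hRR', Matrix.one_mul]
  have cT : ∀ M : Matrix n n ℂ, T * (T⁻¹ * M) = M := fun M => by
    rw [← Matrix.mul_assoc, hTT, Matrix.one_mul]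
  have cT' : ∀ M : Matrix n n ℂ, T⁻¹ * (T * M) = M := fun M => by
    rw [← Matrix.mul_assoc, hTT', Matrix.one_mul]
  have cB : ∀ M : Matrix n n ℂ, (1 - B) * ((1 - B)⁻¹ * M) = M := fun M => by
    rw [← Matrix.mul_assoc, hBB, Matrix.one_mul]
  have cB' : ∀ M : Matrix n n ℂ, (1 - B)⁻¹ * ((1 - B) * M) = M := fun M => by
    rw [← Matrix.mul_assoc, hBB', Matrix.one_mul]
  have cS : ∀ M : Matrix n n ℂ, (Y_C + Y_R) * ((Y_C + Y_R)⁻¹ * M) = M := fun M => by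
    rw [← Matrix.mul_assoc, hSS, Matrix.one_mul]
  have cS' : ∀ M : Matrix n n ℂ, (Y_C + Y_R)⁻¹ * ((Y_C + Y_R) * M) = M := fun M => by
    rw [← Matrix.mul_assoc, hSS', Matrix.one_mul]
  set ρ := T⁻¹ * Y_C * (Y_C + Y_R)⁻¹ * (Y_C - Y_R) * Y_C⁻¹ * T with hρ
  set Yin := T * (1 + B) * (1 - B)⁻¹ * T⁻¹ * Y_C with hYin
  set P := T * (1 + B) + Y_R * Y_C⁻¹ * T * (1 - B) with hPdef
  set Q := T * (1 + B) - Y_R * Y_C⁻¹ * T * (1 - B) with hQdef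
  -- factorizations of Yin ± Y_R
  have hsum : Yin + Y_R = P * ((1 - B)⁻¹ * (T⁻¹ * Y_C)) := by
    rw [hYin, hPdef]
    simp only [Matrix.add_mul, Matrix.mul_assoc, cB, cT, cC', cB', cT', cC,
      Matrix.mul_one, Matrix.one_mul, hBB, hTT, hCC', hCC, hTT', hBB']
  have hdiff : Yin - Y_R = Q * ((1 - B)⁻¹ * (T⁻¹ * Y_C)) := by
    rw [hYin, hQdef]
    simp only [Matrix.sub_mul, Matrix.mul_assoc, cB, cT, cC', cB', cT', cC,
      Matrix.mul_one, Matrix.one_mul, hBB, hTT, hCC', hCC, hTT', hBB']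
  -- P is a unit
  have hPfac : P = (Yin + Y_R) * (Y_C⁻¹ * (T * (1 - B))) := by
    rw [hsum]
    simp only [Matrix.mul_assoc, cB, cT, cC', cB', cT', cC,
      Matrix.mul_one, Matrix.one_mul, hBB, hTT, hCC', hCC, hTT', hBB']
  have hPunit : IsUnit P := by
    rw [hPfac]
    exact hIn.mul ((Matrix.isUnit_nonsing_inv_iff.mpr hC).mul (hT.mul hB))
  have dP := (Matrix.isUnit_iff_isUnit_det _).mp hPunit
  have hPP : P * P⁻¹ = 1 := Matrix.mul_nonsing_inv _ dP
  have hPP' : P⁻¹ * P = 1 := Matrix.nonsing_inv_mul _ dP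
  have cP : ∀ M : Matrix n n ℂ, P * (P⁻¹ * M) = M := fun M => by
    rw [← Matrix.mul_assoc, hPP, Matrix.one_mul]
  have cP' : ∀ M : Matrix n n ℂ, P⁻¹ * (P * M) = M := fun M => by
    rw [← Matrix.mul_assoc, hPP', Matrix.one_mul]
  -- key products
  have key1 : (Y_C + Y_R) * (Y_C⁻¹ * (T * (1 + ρ * B))) = P := by
    rw [hρ, hPdef]
    simp only [Matrix.mul_add, Matrix.add_mul, Matrix.mul_sub, Matrix.sub_mul,
      Matrix.mul_assoc, cC, cC', cT, cT', cS, cS', cB, cB',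
      Matrix.mul_one, Matrix.one_mul]
    abel
  have key2 : (Y_C + Y_R) * (Y_C⁻¹ * (T * (ρ + B))) = Q := by
    rw [hρ, hQdef]
    simp only [Matrix.mul_add, Matrix.add_mul, Matrix.mul_sub, Matrix.sub_mul,
      Matrix.mul_assoc, cC, cC', cT, cT', cS, cS', cB, cB',
      Matrix.mul_one, Matrix.one_mul]
    abel
  have hfac1 : 1 + ρ * B = T⁻¹ * (Y_C * ((Y_C + Y_R)⁻¹ * P)) := by
    rw [← key1]
    simp only [Matrix.mul_assoc, cS', cC, cT']
  have hfac2 : ρ + B = T⁻¹ * (Y_C * ((Y_C + Y_R)⁻¹ * Q)) := by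
    rw [← key2]
    simp only [Matrix.mul_assoc, cS', cC, cT']
  -- the three inverses
  have hGBinv : (1 + ρ * B)⁻¹ = P⁻¹ * ((Y_C + Y_R) * (Y_C⁻¹ * T)) := by
    apply Matrix.inv_eq_right_inv
    rw [hfac1]
    simp only [Matrix.mul_assoc, cP, cS', cC, cC', cS, cT', hTT']
  have hIninv : (Yin + Y_R)⁻¹ = Y_C⁻¹ * (T * ((1 - B) * P⁻¹)) := by
    apply Matrix.inv_eq_right_inv
    rw [hsum]
    simp only [Matrix.mul_assoc, cB', cT', cC', cC, cT, cB, hPP]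
  have hNinv : ((Y_C + Y_R) * Y_C⁻¹)⁻¹ = Y_C * (Y_C + Y_R)⁻¹ := by
    apply Matrix.inv_eq_right_inv
    rw [Matrix.mul_assoc, cC', hSS]
  -- rewrite the goal
  rw [add_comm Y_R Y_C, hIninv, hdiff, hfac2, hGBinv, hNinv]
  simp only [Matrix.mul_assoc, cT, cT', cC, cC', cS, cS', cB, cB', cR, cR', cP, cP',
    hSS, hSS', hCC, hCC', hTT, hTT', hBB, hBB', Matrix.mul_one, Matrix.one_mul]
  -- remaining goal should be
  -- Y_R * (Y_C⁻¹ * (T * ((1-B) * (P⁻¹ * (Q * ((1-B)⁻¹ * (T⁻¹ * (Y_C * Y_R⁻¹)))))))) = Q * P⁻¹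
  set R' := Y_R * (Y_C⁻¹ * (T * (1 - B))) with hR'def
  have hQP : Q = P - (R' + R') := by
    rw [hQdef, hPdef, hR'def]
    simp only [Matrix.mul_assoc]
    abel
  have hcomm : R' * (P⁻¹ * Q) = Q * (P⁻¹ * R') := by
    rw [hQP]
    simp only [Matrix.mul_sub, Matrix.sub_mul, Matrix.mul_add, Matrix.add_mul,
      cP', hPP', Matrix.mul_one, Matrix.mul_assoc, cP]
  calc Y_R * (Y_C⁻¹ * (T * ((1 - B) * (P⁻¹ * (Q * ((1 - B)⁻¹ * (T⁻¹ * (Y_C * Y_R⁻¹))))))))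
      = R' * (P⁻¹ * Q) * ((1 - B)⁻¹ * (T⁻¹ * (Y_C * Y_R⁻¹))) := by
        rw [hR'def]; simp only [Matrix.mul_assoc]
    _ = Q * (P⁻¹ * R') * ((1 - B)⁻¹ * (T⁻¹ * (Y_C * Y_R⁻¹))) := by rw [hcomm]
    _ = Q * P⁻¹ := by
        rw [hR'def]
        simp only [Matrix.mul_assoc, cB, cT', cC', cC, cT, cB', cR, cR', hRR, hRR',
          Matrix.mul_one]
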